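/- Let P_0, P_1, ..., P_N be integer-valued random variables with P_0 = 0, and suppose that for each 0 ≤ k < N and all integers i, j: P(P_{k+1} ≥ i + j | P_k = i) ≥ P(X ≥ j), where X has a fixed integer distribution. Then for i.i.d. copies X_1, ..., X_N of X, P(P_N ≥ i) ≥ P(X_1 + ... + X_N ≥ i) for every integer i. -/

import Mathlib

/-!
Write `α ≤ₛₜ β` (`Measure.StochasticallyLE`) when `α [i, ∞) ≤ β [i, ∞)` for every `i`.
Convolution with a fixed `ν` preserves `≤ₛₜ`, because `(α ∗ ν) [i, ∞) = ∫ α [i - y, ∞) dν(y)`. Expanding instead over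
the atoms of the first factor, `(law P_k ∗ ν) [i, ∞) = ∑ₘ P(P_k = m) ν [i - m, ∞)`, which the
hypothesis bounds termwise by `∑ₘ P(P_{k+1} ≥ i, P_k = m)`; so `law P_k ∗ ν ≤ₛₜ law P_{k+1}`.
By independence the law of `X_1 + ⋯ + X_{k+1}` is that of `X_1 + ⋯ + X_k` convolved with `ν`,
and induction on `k` gives `law (X_1 + ⋯ + X_k) ≤ₛₜ law P_k`.
-/

open MeasureTheory ProbabilityTheory Set

namespace MeasureTheory

lemma tsum_measure_inter_preimage_singleton {Ω β : Type*} [MeasurableSpace Ω] [MeasurableSpace β]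
    [Countable β] [MeasurableSingletonClass β] (μ : Measure Ω) {f : Ω → β} (hf : Measurable f)
    (s : Set Ω) : ∑' b, μ (s ∩ f ⁻¹' {b}) = μ s := by
  have hfiber (b : β) : MeasurableSet (f ⁻¹' {b}) := hf (measurableSet_singleton b)
  calc ∑' b, μ (s ∩ f ⁻¹' {b}) = ∑' b, μ.restrict s (f ⁻¹' {b}) := by
        simp only [Measure.restrict_apply (hfiber _), inter_comm]
    _ = μ.restrict s (⋃ b, f ⁻¹' {b}) := (measure_iUnion (pairwise_disjoint_fiber f) hfiber).symm
    _ = μ s := by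
        rw [← preimage_iUnion, iUnion_of_singleton, preimage_univ, Measure.restrict_apply_univ]

namespace Measure

variable {M : Type*} [PartialOrder M] [MeasurableSpace M]

def StochasticallyLE (α β : Measure M) : Prop := ∀ i : M, α (Ici i) ≤ β (Ici i)

lemma StochasticallyLE.refl (α : Measure M) : StochasticallyLE α α := fun _ => le_rfl

lemma StochasticallyLE.trans {α β γ : Measure M} (hαβ : StochasticallyLE α β)
    (hβγ : StochasticallyLE β γ) : StochasticallyLE α γ := fun i => (hαβ i).trans (hβγ i)

variable [AddCommGroup M] [IsOrderedAddMonoid M] [DiscreteMeasurableSpace M] [MeasurableAdd₂ M]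

lemma conv_apply_Ici_eq_lintegral_right (α ν : Measure M) [SFinite α] [SFinite ν] (i : M) :
    (α ∗ ν) (Ici i) = ∫⁻ y, α (Ici (i - y)) ∂ν := by
  rw [conv, map_apply measurable_add .of_discrete, prod_apply_symm (measurable_add .of_discrete)]
  congr! with y
  ext x
  simp

lemma conv_apply_Ici_eq_lintegral_left (α ν : Measure M) [SFinite ν] (i : M) :
    (α ∗ ν) (Ici i) = ∫⁻ x, ν (Ici (i - x)) ∂α := by
  rw [conv, map_apply measurable_add .of_discrete, prod_apply (measurable_add .of_discrete)]
  congr! with x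
  ext y
  simp [add_comm]

lemma StochasticallyLE.conv_right {α β : Measure M} [SFinite α] [SFinite β]
    (h : StochasticallyLE α β) (ν : Measure M) [SFinite ν] :
    StochasticallyLE (α ∗ ν) (β ∗ ν) := fun i => by
  simp only [conv_apply_Ici_eq_lintegral_right]
  exact lintegral_mono fun y => h (i - y)

lemma stochasticallyLE_map_of_increment [Countable M] {Ω : Type*} [MeasurableSpace Ω]
    {μ : Measure Ω} {f g : Ω → M} (hf : Measurable f) (hg : Measurable g)
    {ν : Measure M} [SFinite ν]
    (h : ∀ i j, ν (Ici j) * μ (f ⁻¹' {i}) ≤ μ (g ⁻¹' Ici (i + j) ∩ f ⁻¹' {i})) :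
    StochasticallyLE (μ.map f ∗ ν) (μ.map g) := fun i => by
  calc (μ.map f ∗ ν) (Ici i) = ∑' m, ν (Ici (i - m)) * μ (f ⁻¹' {m}) := by
        simp only [conv_apply_Ici_eq_lintegral_left, lintegral_countable',
          map_apply hf (measurableSet_singleton _)]
    _ ≤ ∑' m, μ (g ⁻¹' Ici i ∩ f ⁻¹' {m}) := by
        refine ENNReal.tsum_le_tsum fun m => ?_
        simpa only [add_sub_cancel] using h m (i - m)
    _ = μ.map g (Ici i) := by
        rw [tsum_measure_inter_preimage_singleton μ hf, map_apply hg .of_discrete]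

end Measure

end MeasureTheory

lemma ProbabilityTheory.iIndepFun.map_finsetSum_insert {Ω ι M : Type*} [MeasurableSpace Ω]
    {μ : Measure Ω} [IsFiniteMeasure μ] [DecidableEq ι] [AddCommMonoid M] [MeasurableSpace M]
    [MeasurableAdd₂ M] {X : ι → Ω → M} (hindep : iIndepFun X μ) (hX : ∀ i, Measurable (X i))
    {s : Finset ι} {i : ι} (hi : i ∉ s) :
    μ.map (∑ j ∈ insert i s, X j) = μ.map (∑ j ∈ s, X j) ∗ μ.map (X i) := by
  rw [Finset.sum_insert hi, add_comm]
  exact (hindep.indepFun_finsetSum_of_notMem hX hi).map_add_eq_map_conv_map (by fun_prop) (hX i)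

lemma Fin.univ_filter_val_lt_add_one {N k : ℕ} (hk : k < N) :
    ({j : Fin N | (j : ℕ) < k + 1} : Finset (Fin N)) =
      insert ⟨k, hk⟩ ({j : Fin N | (j : ℕ) < k} : Finset (Fin N)) := by
  ext j
  simp [Fin.ext_iff]
  omega

/-- If each increment of the integer-valued process (P_k) stochastically
dominates a fixed distribution ν conditionally on the past value, then P_N stochastically
dominates the sum of N i.i.d. random variables of law ν. -/
theorem process_dominates_iid_sum {Ω : Type*} [MeasurableSpace Ω]
    (μ : Measure Ω) [IsProbabilityMeasure μ]
    (N : ℕ) (P : ℕ → Ω → ℤ) (hPmeas : ∀ k, Measurable (P k))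
    (hP0 : ∀ ω, P 0 ω = 0)
    (ν : Measure ℤ) [IsProbabilityMeasure ν]
    (hcond : ∀ k < N, ∀ i j : ℤ,
      ν {x : ℤ | j ≤ x} * μ {ω | P k ω = i} ≤
        μ ({ω | i + j ≤ P (k + 1) ω} ∩ {ω | P k ω = i}))
    (X : Fin N → Ω → ℤ) (hXmeas : ∀ i, Measurable (X i))
    (hindep : iIndepFun X μ)
    (hlaw : ∀ i, Measure.map (X i) μ = ν) :
    ∀ i : ℤ, μ {ω | i ≤ ∑ k, X k ω} ≤ μ {ω | i ≤ P N ω} := by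
  set S : ℕ → Ω → ℤ := fun k => ∑ j ∈ {j : Fin N | (j : ℕ) < k}, X j
  have hdom : ∀ k ≤ N, Measure.StochasticallyLE (μ.map (S k)) (μ.map (P k)) := by
    intro k hk
    induction k with
    | zero =>
      have hP : P 0 = 0 := funext hP0
      simpa [S, hP] using Measure.StochasticallyLE.refl _
    | succ k ih =>
      have hS : μ.map (S (k + 1)) = μ.map (S k) ∗ ν := by
        rw [← hlaw ⟨k, hk⟩, ← hindep.map_finsetSum_insert hXmeas (by simp),
          ← Fin.univ_filter_val_lt_add_one hk]
      rw [hS]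
      exact ((ih (by omega)).conv_right ν).trans
        (Measure.stochasticallyLE_map_of_increment (hPmeas k) (hPmeas (k + 1)) (hcond k hk))
  intro i
  have hSN : S N = fun ω => ∑ j, X j ω := by ext; simp [S, Finset.sum_apply]
  have hN := hdom N le_rfl i
  rwa [hSN, Measure.map_apply (by fun_prop) measurableSet_Ici,
    Measure.map_apply (hPmeas N) measurableSet_Ici] at hN
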